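/- Let A_K, C_K ∈ ℝ^{n×n} with A_K ≠ 0, let Λ ∈ ℝ^{n×n} be symmetric, and let P ∈ ℝ^{n×n} be a symmetric positive semidefinite solution of the Lyapunov equation A_K^⊤ P + P A_K + C_K^⊤ P C_K + Λ = 0. Then λ1(P) ≥ λ1(Λ + C_K^⊤ P C_K) / (2‖A_K‖), where λ1(·) denotes the smallest eigenvalue of a symmetric matrix and ‖·‖ the spectral norm. -/

import Mathlib

open Matrix Filter

attribute [local instance] Matrix.normedAddCommGroup Matrix.normedSpace

noncomputable def froNorm {p q : ℕ} (X : Matrix (Fin p) (Fin q) ℝ) : ℝ :=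
  Real.sqrt (Matrix.trace (Xᵀ * X))

noncomputable def specNorm {p q : ℕ} (X : Matrix (Fin p) (Fin q) ℝ) : ℝ :=
  ‖(LinearMap.toContinuousLinearMap (Matrix.toEuclideanLin X))‖

noncomputable def minEig {p : ℕ} (M : Matrix (Fin p) (Fin p) ℝ) : ℝ :=
  sInf {r : ℝ | ∃ v : Fin p → ℝ, v ≠ 0 ∧ M.mulVec v = r • v}

noncomputable def maxEig {p : ℕ} (M : Matrix (Fin p) (Fin p) ℝ) : ℝ :=
  sSup {r : ℝ | ∃ v : Fin p → ℝ, v ≠ 0 ∧ M.mulVec v = r • v}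

def IsMSStabilizer {n m : ℕ} (A C : Matrix (Fin n) (Fin n) ℝ)
    (B D : Matrix (Fin n) (Fin m) ℝ) (K : Matrix (Fin m) (Fin n) ℝ) : Prop :=
  ∀ Y0 : Matrix (Fin n) (Fin n) ℝ, Y0.PosSemidef →
    ∀ Y : ℝ → Matrix (Fin n) (Fin n) ℝ,
      Y 0 = Y0 →
      (∀ t : ℝ, HasDerivAt Y
        ((A + B * K) * Y t + Y t * (A + B * K)ᵀ + (C + D * K) * Y t * (C + D * K)ᵀ) t) →
      Tendsto Y atTop (nhds 0)

section helpers

variable {p : ℕ}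

lemma dot_eq_inner (x y : Fin p → ℝ) :
    x ⬝ᵥ y = @inner ℝ _ _ ((WithLp.equiv 2 (Fin p → ℝ)).symm x) ((WithLp.equiv 2 (Fin p → ℝ)).symm y) := by
  simp [PiLp.inner_apply, dotProduct, mul_comm]

lemma symm_dot {M : Matrix (Fin p) (Fin p) ℝ} (hMt : Mᵀ = M) (u v : Fin p → ℝ) :
    u ⬝ᵥ (M *ᵥ v) = (M *ᵥ u) ⬝ᵥ v := by
  rw [Matrix.dotProduct_mulVec, ← Matrix.mulVec_transpose, hMt]

lemma herm_transpose {M : Matrix (Fin p) (Fin p) ℝ} (hM : M.IsHermitian) : Mᵀ = M := by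
  simpa [Matrix.conjTranspose_eq_transpose_of_trivial, Matrix.IsHermitian] using hM

noncomputable def minEig' {M : Matrix (Fin p) (Fin p) ℝ} (hM : M.IsHermitian) : ℝ :=
  sInf {r : ℝ | ∃ v : Fin p → ℝ, v ≠ 0 ∧ M.mulVec v = r • v}

lemma eigSet_eq {M : Matrix (Fin p) (Fin p) ℝ} (hM : M.IsHermitian) :
    {r : ℝ | ∃ v : Fin p → ℝ, v ≠ 0 ∧ M.mulVec v = r • v} = Set.range hM.eigenvalues := by
  ext r
  constructor
  · rintro ⟨v, hv, hMv⟩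
    set b := hM.eigenvectorBasis with hb
    set w : EuclideanSpace ℝ (Fin p) := (WithLp.equiv 2 (Fin p → ℝ)).symm v with hwdef
    have hw : w ≠ 0 := by simpa [hwdef] using hv
    obtain ⟨i, hi⟩ : ∃ i, b.repr w i ≠ 0 := by
      by_contra h
      push_neg at h
      exact hw (by simpa using congrArg b.repr.symm (PiLp.ext h : b.repr w = 0))
    have hci : (⇑(b i) : Fin p → ℝ) ⬝ᵥ v = b.repr w i := by
      rw [b.repr_apply_apply w i, dot_eq_inner]
      rfl
    have h1 : (⇑(b i) : Fin p → ℝ) ⬝ᵥ (M *ᵥ v) = (M *ᵥ ⇑(b i)) ⬝ᵥ v :=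
      symm_dot (herm_transpose hM) _ _
    rw [hMv, hM.mulVec_eigenvectorBasis i, dotProduct_smul, smul_dotProduct,
      smul_eq_mul, smul_eq_mul, hci] at h1
    exact ⟨i, (mul_right_cancel₀ hi h1).symm⟩
  · rintro ⟨i, rfl⟩
    exact ⟨hM.eigenvectorBasis i, by simpa using hM.eigenvectorBasis.orthonormal.ne_zero i,
      hM.mulVec_eigenvectorBasis i⟩

lemma minEig_le_eig {M : Matrix (Fin p) (Fin p) ℝ} (hM : M.IsHermitian) (i : Fin p) :
    sInf {r : ℝ | ∃ v : Fin p → ℝ, v ≠ 0 ∧ M.mulVec v = r • v} ≤ hM.eigenvalues i := by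
  rw [eigSet_eq hM]
  exact csInf_le (Set.finite_range _).bddBelow ⟨i, rfl⟩

lemma minEig_mem {M : Matrix (Fin p) (Fin p) ℝ} (hM : M.IsHermitian) [Nonempty (Fin p)] :
    ∃ i, sInf {r : ℝ | ∃ v : Fin p → ℝ, v ≠ 0 ∧ M.mulVec v = r • v} = hM.eigenvalues i := by
  rw [eigSet_eq hM]
  exact (Set.range_nonempty hM.eigenvalues).csInf_mem (Set.finite_range _)
    |>.imp fun i hi => hi.symm

lemma quad_ge {M : Matrix (Fin p) (Fin p) ℝ} (hM : M.IsHermitian) (v : Fin p → ℝ) :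
    sInf {r : ℝ | ∃ v : Fin p → ℝ, v ≠ 0 ∧ M.mulVec v = r • v} * (v ⬝ᵥ v)
      ≤ v ⬝ᵥ (M *ᵥ v) := by
  set μ := sInf {r : ℝ | ∃ v : Fin p → ℝ, v ≠ 0 ∧ M.mulVec v = r • v} with hμ
  set b := hM.eigenvectorBasis with hb
  set w : EuclideanSpace ℝ (Fin p) := (WithLp.equiv 2 (Fin p → ℝ)).symm v with hwdef
  have hbv : ∀ i, (⇑(b i) : Fin p → ℝ) ⬝ᵥ v = b.repr w i := by
    intro i
    rw [b.repr_apply_apply w i, dot_eq_inner]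
    rfl
  have key : v ⬝ᵥ (M *ᵥ v) = ∑ i, hM.eigenvalues i * (b.repr w i)^2 := by
    have h0 : v ⬝ᵥ (M *ᵥ v)
        = @inner ℝ _ _ w ((WithLp.equiv 2 (Fin p → ℝ)).symm (M *ᵥ v)) := dot_eq_inner _ _
    rw [h0, ← b.sum_inner_mul_inner w ((WithLp.equiv 2 (Fin p → ℝ)).symm (M *ᵥ v))]
    refine Finset.sum_congr rfl fun i _ => ?_
    have e1 : @inner ℝ _ _ (b i) ((WithLp.equiv 2 (Fin p → ℝ)).symm (M *ᵥ v))
        = ⇑(b i) ⬝ᵥ (M *ᵥ v) := (dot_eq_inner (⇑(b i)) (M *ᵥ v)).symm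
    have e2 : @inner ℝ _ _ w (b i) = b.repr w i :=
      (real_inner_comm (b i) w).trans (b.repr_apply_apply w i).symm
    rw [e1, e2, symm_dot (herm_transpose hM), hM.mulVec_eigenvectorBasis i,
      smul_dotProduct, smul_eq_mul, hbv i]
    ring
  have keyv : v ⬝ᵥ v = ∑ i, (b.repr w i)^2 := by
    rw [dot_eq_inner, ← b.sum_inner_mul_inner w w]
    refine Finset.sum_congr rfl fun i _ => ?_
    have e2 : @inner ℝ _ _ w (b i) = b.repr w i :=
      (real_inner_comm (b i) w).trans (b.repr_apply_apply w i).symm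
    rw [e2, ← b.repr_apply_apply w i]; ring
  rw [key, keyv, Finset.mul_sum]
  refine Finset.sum_le_sum fun i _ => ?_
  exact mul_le_mul_of_nonneg_right (minEig_le_eig hM i) (sq_nonneg _)

lemma dot_mulVec_le {q : ℕ} (X : Matrix (Fin p) (Fin p) ℝ) (v : Fin p → ℝ) :
    v ⬝ᵥ (X *ᵥ v) ≤ ‖(LinearMap.toContinuousLinearMap (Matrix.toEuclideanLin X))‖ * (v ⬝ᵥ v) := by
  set L := LinearMap.toContinuousLinearMap (Matrix.toEuclideanLin X) with hL
  set w : EuclideanSpace ℝ (Fin p) := (WithLp.equiv 2 (Fin p → ℝ)).symm v with hwdef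
  have h0 : v ⬝ᵥ (X *ᵥ v) = @inner ℝ _ _ w (L w) := by
    rw [dot_eq_inner]; rfl
  rw [h0]
  calc @inner ℝ _ _ w (L w) ≤ ‖w‖ * ‖L w‖ := real_inner_le_norm _ _
    _ ≤ ‖w‖ * (‖L‖ * ‖w‖) := by
        exact mul_le_mul_of_nonneg_left (L.le_opNorm w) (norm_nonneg _)
    _ = ‖L‖ * (v ⬝ᵥ v) := by
        rw [show (v ⬝ᵥ v) = @inner ℝ _ _ w w from dot_eq_inner v v,
          real_inner_self_eq_norm_mul_norm]; ring

end helpers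

theorem stmt19' {n : ℕ} (AK CK Λ P : Matrix (Fin n) (Fin n) ℝ)
    (hAK : AK ≠ 0) (hΛ : Λᵀ = Λ) (hPsd : P.PosSemidef)
    (hP : AKᵀ * P + P * AK + CKᵀ * P * CK + Λ = 0) :
    sInf {r : ℝ | ∃ v : Fin n → ℝ, v ≠ 0 ∧ P.mulVec v = r • v} ≥
      sInf {r : ℝ | ∃ v : Fin n → ℝ, v ≠ 0 ∧ (Λ + CKᵀ * P * CK).mulVec v = r • v} /
        (2 * ‖(LinearMap.toContinuousLinearMap (Matrix.toEuclideanLin AK))‖) := by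
  haveI : Nonempty (Fin n) := by
    rcases Nat.eq_zero_or_pos n with h | h
    · exfalso; apply hAK; subst h; ext i j; exact i.elim0
    · exact ⟨⟨0, h⟩⟩
  have hPH : P.IsHermitian := hPsd.1
  have hPt : Pᵀ = P := herm_transpose hPH
  set S := Λ + CKᵀ * P * CK with hSdef
  have hSt : Sᵀ = S := by
    simp [hSdef, Matrix.transpose_mul, Matrix.transpose_add, hΛ, hPt, Matrix.mul_assoc]
  have hSH : S.IsHermitian := by
    simpa [Matrix.IsHermitian, Matrix.conjTranspose_eq_transpose_of_trivial] using hSt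
  set μ := sInf {r : ℝ | ∃ v : Fin n → ℝ, v ≠ 0 ∧ P.mulVec v = r • v} with hμdef
  obtain ⟨i0, hi0⟩ := minEig_mem hPH
  set v : Fin n → ℝ := ⇑(hPH.eigenvectorBasis i0) with hvdef
  have hv : v ≠ 0 := by
    have := hPH.eigenvectorBasis.orthonormal.ne_zero i0
    simpa [hvdef] using this
  have hPv : P *ᵥ v = μ • v := by
    rw [hμdef, hi0]; exact hPH.mulVec_eigenvectorBasis i0
  have hμ0 : 0 ≤ μ := by rw [hμdef, hi0]; exact hPsd.eigenvalues_nonneg i0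
  set q := v ⬝ᵥ v with hqdef
  have hq : 0 < q := by
    have := Matrix.dotProduct_self_star_pos_iff (v := v) |>.mpr hv
    simpa [hqdef] using this
  -- operator norm positive
  set N := ‖(LinearMap.toContinuousLinearMap (Matrix.toEuclideanLin AK))‖ with hNdef
  have hN : 0 < N := by
    rw [hNdef, norm_pos_iff]
    intro h
    exact hAK (Matrix.toEuclideanLin.map_eq_zero_iff.mp
      (LinearMap.toContinuousLinearMap.map_eq_zero_iff.mp h))
  -- quadratic form computation
  have hSv : v ⬝ᵥ (S *ᵥ v) = 2 * μ * (v ⬝ᵥ ((-AK) *ᵥ v)) := by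
    have h0 : S = -(AKᵀ * P + P * AK) := by
      rw [hSdef, eq_neg_iff_add_eq_zero, ← hP]; abel
    have h1 : v ⬝ᵥ ((AKᵀ * P) *ᵥ v) = μ * (v ⬝ᵥ (AK *ᵥ v)) := by
      rw [← Matrix.mulVec_mulVec, hPv, Matrix.mulVec_smul, dotProduct_smul, smul_eq_mul,
        Matrix.mulVec_transpose, dotProduct_comm, ← Matrix.dotProduct_mulVec]
    have h2 : v ⬝ᵥ ((P * AK) *ᵥ v) = μ * (v ⬝ᵥ (AK *ᵥ v)) := by
      rw [← Matrix.mulVec_mulVec, symm_dot hPt, hPv, smul_dotProduct, smul_eq_mul]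
    rw [h0]
    simp only [Matrix.neg_mulVec, dotProduct_neg, Matrix.add_mulVec,
      dotProduct_add, h1, h2, Matrix.neg_mulVec]
    ring
  have hmain : sInf {r : ℝ | ∃ v : Fin n → ℝ, v ≠ 0 ∧ S.mulVec v = r • v} * q
      ≤ 2 * μ * N * q := by
    calc sInf {r : ℝ | ∃ v : Fin n → ℝ, v ≠ 0 ∧ S.mulVec v = r • v} * q
        ≤ v ⬝ᵥ (S *ᵥ v) := quad_ge hSH v
      _ = 2 * μ * (v ⬝ᵥ ((-AK) *ᵥ v)) := hSv
      _ ≤ 2 * μ * (‖(LinearMap.toContinuousLinearMap (Matrix.toEuclideanLin (-AK)))‖ * q) := by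
          refine mul_le_mul_of_nonneg_left (dot_mulVec_le (q := 0) (-AK) v) (by linarith)
      _ = 2 * μ * N * q := by
          rw [map_neg, map_neg, norm_neg]; ring
  have hfin : sInf {r : ℝ | ∃ v : Fin n → ℝ, v ≠ 0 ∧ S.mulVec v = r • v} ≤ 2 * μ * N :=
    le_of_mul_le_mul_right hmain hq
  rw [ge_iff_le, div_le_iff₀ (by linarith)]
  linarith [hfin]

/-- λ1(P) ≥ λ1(Λ + CKᵀ P CK) / (2‖AK‖) for a PSD solution P of the
Lyapunov equation. -/
theorem stmt19 {n : ℕ} (AK CK Λ P : Matrix (Fin n) (Fin n) ℝ)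
    (hAK : AK ≠ 0) (hΛ : Λᵀ = Λ) (hPsd : P.PosSemidef)
    (hP : AKᵀ * P + P * AK + CKᵀ * P * CK + Λ = 0) :
    minEig P ≥ minEig (Λ + CKᵀ * P * CK) / (2 * specNorm AK) := by
  unfold minEig specNorm
  exact stmt19' AK CK Λ P hAK hΛ hPsd hP
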